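/- arXiv:math/0605780 — 4 statements merged into one kernel-verified Lean document; each statement's English description precedes it below -/
import Mathlib

section
/- For every pair (θ, φ) of real numbers with 0 < θ < 1/2 and -1/2 < φ < -1/2 + θ, there exist nonzero complex numbers x, y with 1 + x + y = 0, arg(x) = 2πθ and arg(y) = 2πφ. -/
/-!
Put `α = 2πθ` and `β = 2πφ`. Then `0 < α < π`, `-π < β < 0` and `β - α ∈ (-2π, -π)`, so
`sin (β - α) > 0`. Solving `1 + r e^{iα} + s e^{iβ} = 0` for real `r, s`
by Cramer's rule (the law of sines) gives `r = -sin β / sin (β - α)` and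
`s = sin α / sin (β - α)`, both positive, so `r e^{iα}` and `s e^{iβ}` have arguments `α` and `β`.
-/

open Real

theorem one_add_mul_cos_add_sin_mul_I_eq_zero {α β : ℝ} (h : Real.sin (β - α) ≠ 0) :
    1 + ↑(-Real.sin β / Real.sin (β - α)) * (Complex.cos α + Complex.sin α * Complex.I)
      + ↑(Real.sin α / Real.sin (β - α)) * (Complex.cos β + Complex.sin β * Complex.I) = 0 := by
  have hD : Complex.sin (β - α) ≠ 0 := by exact_mod_cast h
  push_cast
  rw [Complex.sin_sub] at hD ⊢
  field_simp
  ring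

theorem exists_one_add_add_eq_zero_of_arg {α β : ℝ} (hα : α < π) (hβ₁ : -π < β)
    (hβ₂ : β < α - π) :
    ∃ x y : ℂ, 1 + x + y = 0 ∧ x.arg = α ∧ y.arg = β := by
  have hD : 0 < Real.sin (β - α) := by
    rw [← Real.sin_add_two_pi]
    exact Real.sin_pos_of_pos_of_lt_pi (by linarith) (by linarith)
  have hr : 0 < -Real.sin β / Real.sin (β - α) :=
    div_pos (neg_pos.mpr (Real.sin_neg_of_neg_of_neg_pi_lt (by linarith) hβ₁)) hD
  have hs : 0 < Real.sin α / Real.sin (β - α) :=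
    div_pos (Real.sin_pos_of_pos_of_lt_pi (by linarith) hα) hD
  exact ⟨_, _, one_add_mul_cos_add_sin_mul_I_eq_zero hD.ne',
    Complex.arg_mul_cos_add_sin_mul_I hr ⟨by linarith, hα.le⟩,
    Complex.arg_mul_cos_add_sin_mul_I hs ⟨hβ₁, by linarith⟩⟩

theorem stmt_2_general (θ φ : ℝ) (hθ₂ : θ < 1 / 2)
    (hφ₁ : -(1 / 2) < φ) (hφ₂ : φ < -(1 / 2) + θ) :
    ∃ x y : ℂ, x ≠ 0 ∧ y ≠ 0 ∧ 1 + x + y = 0 ∧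
      x.arg = 2 * π * θ ∧ y.arg = 2 * π * φ := by
  have hπ := pi_pos
  obtain ⟨x, y, hsum, hx, hy⟩ := exists_one_add_add_eq_zero_of_arg (α := 2 * π * θ)
    (β := 2 * π * φ) (by nlinarith) (by nlinarith) (by nlinarith)
  have hx₀ : x ≠ 0 := by
    rintro rfl
    rw [Complex.arg_zero] at hx
    nlinarith
  have hy₀ : y ≠ 0 := by
    rintro rfl
    rw [Complex.arg_zero] at hy
    nlinarith
  exact ⟨x, y, hx₀, hy₀, hsum, hx, hy⟩

/-- For every `(θ, φ)` with `0 < θ < 1/2` and `-1/2 < φ < -1/2 + θ`, there are nonzero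
complex numbers `x, y` with `1 + x + y = 0`, `arg x = 2πθ` and `arg y = 2πφ`. -/
theorem stmt_2 (θ φ : ℝ) (hθ₁ : 0 < θ) (hθ₂ : θ < 1 / 2)
    (hφ₁ : -(1 / 2) < φ) (hφ₂ : φ < -(1 / 2) + θ) :
    ∃ x y : ℂ, x ≠ 0 ∧ y ≠ 0 ∧ 1 + x + y = 0 ∧
      x.arg = 2 * π * θ ∧ y.arg = 2 * π * φ :=
  stmt_2_general θ φ hθ₂ hφ₁ hφ₂
end

section
/- The map sending a point (x, y) of the curve {1 + x + y = 0, Im(x) > 0} in (ℂ*)² to (arg(x), arg(y)) is injective: if 1 + x₁ + y₁ = 0 = 1 + x₂ + y₂ with Im(x₁), Im(x₂) > 0, arg(x₁) = arg(x₂) and arg(y₁) = arg(y₂), then (x₁, y₁) = (x₂, y₂). -/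
/-- The argument map is injective on the part of the curve `1 + x + y = 0` with
`Im x > 0`. -/
theorem stmt_3 (x₁ y₁ x₂ y₂ : ℂ)
    (hx₁ : x₁ ≠ 0) (hy₁ : y₁ ≠ 0) (hx₂ : x₂ ≠ 0) (hy₂ : y₂ ≠ 0)
    (h₁ : 1 + x₁ + y₁ = 0) (h₂ : 1 + x₂ + y₂ = 0)
    (him₁ : 0 < x₁.im) (him₂ : 0 < x₂.im)
    (ha : x₁.arg = x₂.arg) (hb : y₁.arg = y₂.arg) :
    x₁ = x₂ ∧ y₁ = y₂ := by
  set r : ℝ := ‖x₂‖ / ‖x₁‖ with hr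
  set s : ℝ := ‖y₂‖ / ‖y₁‖ with hs
  have hxeq : (r : ℂ) * x₁ = x₂ := by
    rw [hr]; push_cast; exact (Complex.arg_eq_arg_iff hx₁ hx₂).1 ha
  have hyeq : (s : ℂ) * y₁ = y₂ := by
    rw [hs]; push_cast; exact (Complex.arg_eq_arg_iff hy₁ hy₂).1 hb
  have key : ((r - s : ℝ) : ℂ) * x₁ = ((s - 1 : ℝ) : ℂ) := by
    push_cast
    linear_combination h₂ + hxeq + hyeq - (s : ℂ) * h₁
  have him : (r - s) * x₁.im = 0 := by
    have := congrArg Complex.im key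
    simpa using this
  have hrs : r = s := by
    rcases mul_eq_zero.1 him with h | h
    · linarith
    · exact absurd h (ne_of_gt him₁)
  have hs1 : s = 1 := by
    have h0 : ((s - 1 : ℝ) : ℂ) = 0 := by rw [← key, hrs]; push_cast; ring
    have := Complex.ofReal_eq_zero.1 h0
    linarith
  constructor
  · rw [← hxeq, hrs, hs1]; simp
  · rw [← hyeq, hs1]; simp
end

section
/- The coamoeba of the line {(x,y) ∈ (ℂ*)² : 1 + x + y = 0} under the map (x,y) ↦ (arg x/(2π), arg y/(2π)) ∈ (ℝ/ℤ)² equals the union of the two open triangles U₁ = {(θ,φ) : 0 < θ < 1/2, -1/2 < φ < -1/2 + θ} and U₂ = {(θ,φ) : -1/2 < θ < 0, 1/2 + θ < φ < 1/2} together with the three points (1/2, 0), (1/2, 1/2), and (0, 1/2). -/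
open Real

private lemma arg_one_add_lt {x : ℂ} (hx : 0 < x.im) :
    Complex.arg (1 + x) < Complex.arg x := by
  have him : 0 < (1 + x).im := by simpa using hx
  have hx0 : x ≠ 0 := fun h => by simp [h] at hx
  have h10 : (1 + x) ≠ 0 := fun h => by simp [h] at him
  set a := Complex.arg x with ha
  set b := Complex.arg (1 + x) with hb
  have ha0 : 0 < a := lt_of_le_of_ne (Complex.arg_nonneg_iff.2 hx.le)
    (fun h => by have := Complex.arg_eq_zero_iff.1 h.symm; exact hx.ne' this.2)
  have hb0 : 0 < b := lt_of_le_of_ne (Complex.arg_nonneg_iff.2 him.le)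
    (fun h => by have := Complex.arg_eq_zero_iff.1 h.symm; exact him.ne' this.2)
  have hapi : a ≤ π := Complex.arg_le_pi x
  have hbpi : b ≤ π := Complex.arg_le_pi (1 + x)
  have hsin : 0 < Real.sin (a - b) := by
    rw [Real.sin_sub, Complex.sin_arg, Complex.cos_arg hx0, Complex.sin_arg,
      Complex.cos_arg h10]
    have h1 : (0:ℝ) < ‖x‖ := norm_pos_iff.mpr hx0
    have h2 : (0:ℝ) < ‖1 + x‖ := norm_pos_iff.mpr h10
    have : x.im / ‖x‖ * ((1 + x).re / ‖1 + x‖) -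
        x.re / ‖x‖ * ((1 + x).im / ‖1 + x‖) =
        x.im / (‖x‖ * ‖1 + x‖) := by
      simp only [Complex.add_re, Complex.add_im, Complex.one_re, Complex.one_im]
      field_simp
      ring
    rw [this]
    positivity
  by_contra hle
  push_neg at hle
  have : Real.sin (a - b) ≤ 0 :=
    Real.sin_nonpos_of_nonpos_of_neg_pi_le (by linarith) (by linarith)
  linarith

private lemma forward_pos {x y : ℂ} (h : 1 + x + y = 0) (hx : 0 < x.im) :
    0 < Complex.arg x ∧ Complex.arg x < π ∧ -π < Complex.arg y ∧
      Complex.arg y < Complex.arg x - π := by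
  have hy : y = -(1 + x) := by linear_combination h
  have him : 0 < (1 + x).im := by simpa using hx
  have hargy : Complex.arg y = Complex.arg (1 + x) - π := by
    rw [hy, Complex.arg_neg_eq_arg_sub_pi_of_im_pos him]
  have hb0 : 0 < Complex.arg (1 + x) := lt_of_le_of_ne (Complex.arg_nonneg_iff.2 him.le)
    (fun h => by have := Complex.arg_eq_zero_iff.1 h.symm; exact him.ne' this.2)
  have ha0 : 0 < Complex.arg x := lt_of_le_of_ne (Complex.arg_nonneg_iff.2 hx.le)
    (fun h => by have := Complex.arg_eq_zero_iff.1 h.symm; exact hx.ne' this.2)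
  have hapi : Complex.arg x < π := lt_of_le_of_ne (Complex.arg_le_pi x)
    (fun h => hx.ne' (Complex.arg_eq_pi_iff.1 h).2)
  have key : Complex.arg (1 + x) < Complex.arg x := arg_one_add_lt hx
  exact ⟨ha0, hapi, by linarith, by linarith⟩

private lemma exists_point {α β : ℝ} (hα : α ∈ Set.Ioc (-π) π) (hβ : β ∈ Set.Ioc (-π) π)
    (hr : 0 < -Real.sin β / Real.sin (β - α)) (hs : 0 < Real.sin α / Real.sin (β - α)) :
    ∃ z : ℂˣ × ℂˣ, ((1 : ℂ) + ↑z.1 + ↑z.2 = 0) ∧ Complex.arg ↑z.1 = α ∧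
      Complex.arg ↑z.2 = β := by
  set D := Real.sin (β - α) with hD
  have hD0 : D ≠ 0 := by
    intro h; rw [h, div_zero] at hr; exact lt_irrefl 0 hr
  set r := -Real.sin β / D with hrdef
  set s := Real.sin α / D with hsdef
  set u : ℂ := (r : ℂ) * (Real.cos α + Real.sin α * Complex.I) with hu
  set v : ℂ := (s : ℂ) * (Real.cos β + Real.sin β * Complex.I) with hv
  have hcs : ∀ t : ℝ, ((Real.cos t : ℂ) + Real.sin t * Complex.I) ≠ 0 := by
    intro t h
    rw [Complex.ofReal_cos, Complex.ofReal_sin] at h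
    have := Complex.norm_cos_add_sin_mul_I t
    rw [h] at this; simp at this
  have hu0 : u ≠ 0 := mul_ne_zero (by exact_mod_cast hr.ne') (hcs α)
  have hv0 : v ≠ 0 := mul_ne_zero (by exact_mod_cast hs.ne') (hcs β)
  refine ⟨(Units.mk0 u hu0, Units.mk0 v hv0), ?_, ?_, ?_⟩
  · show (1 : ℂ) + u + v = 0
    rw [hu, hv]
    refine Complex.ext ?_ ?_
    · simp only [Complex.add_re, Complex.one_re, Complex.mul_re, Complex.add_im,
        Complex.ofReal_re, Complex.ofReal_im, Complex.mul_im, Complex.I_re, Complex.I_im,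
        Complex.one_im, Complex.zero_re]
      rw [hrdef, hsdef, hD]
      have hD' : Real.sin β * Real.cos α - Real.cos β * Real.sin α ≠ 0 := by
        rw [← Real.sin_sub]; exact hD0
      rw [Real.sin_sub]
      field_simp
      ring
    · simp only [Complex.add_re, Complex.one_re, Complex.mul_re, Complex.add_im,
        Complex.ofReal_re, Complex.ofReal_im, Complex.mul_im, Complex.I_re, Complex.I_im,
        Complex.one_im, Complex.zero_im]
      rw [hrdef, hsdef]
      field_simp
      ring
  · show Complex.arg u = α
    rw [hu, Complex.arg_real_mul _ hr, Complex.ofReal_cos, Complex.ofReal_sin,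
      Complex.arg_cos_add_sin_mul_I hα]
  · show Complex.arg v = β
    rw [hv, Complex.arg_real_mul _ hs, Complex.ofReal_cos, Complex.ofReal_sin,
      Complex.arg_cos_add_sin_mul_I hβ]

/-- The coamoeba of the line `{1 + x + y = 0}` in `(ℂ*)²`, that is, its image in
`(ℝ/ℤ)²` under `(x,y) ↦ (arg x/(2π), arg y/(2π))`, is the union of the two open
triangles `U₁ = {0 < θ < 1/2, -1/2 < φ < -1/2 + θ}` and
`U₂ = {-1/2 < θ < 0, 1/2 + θ < φ < 1/2}` together with the three points
`(1/2, 0)`, `(1/2, 1/2)` and `(0, 1/2)`. -/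
theorem stmt_7 :
    (fun z : ℂˣ × ℂˣ =>
        (((Complex.arg z.1 / (2 * π) : ℝ) : AddCircle (1 : ℝ)),
         ((Complex.arg z.2 / (2 * π) : ℝ) : AddCircle (1 : ℝ)))) ''
      {z : ℂˣ × ℂˣ | (1 : ℂ) + ↑z.1 + ↑z.2 = 0} =
    {w : AddCircle (1 : ℝ) × AddCircle (1 : ℝ) |
        ∃ θ φ : ℝ, w = ((θ : AddCircle (1 : ℝ)), (φ : AddCircle (1 : ℝ))) ∧
          ((0 < θ ∧ θ < 1 / 2 ∧ -(1 / 2) < φ ∧ φ < -(1 / 2) + θ) ∨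
           (-(1 / 2) < θ ∧ θ < 0 ∧ 1 / 2 + θ < φ ∧ φ < 1 / 2))} ∪
    {((((1:ℝ)/2 : ℝ) : AddCircle (1 : ℝ)), (((0:ℝ) : ℝ) : AddCircle (1 : ℝ))),
     ((((1:ℝ)/2 : ℝ) : AddCircle (1 : ℝ)), (((1:ℝ)/2 : ℝ) : AddCircle (1 : ℝ))),
     ((((0:ℝ) : ℝ) : AddCircle (1 : ℝ)), (((1:ℝ)/2 : ℝ) : AddCircle (1 : ℝ)))} := by
  have hπ := Real.pi_pos
  have h2π : (0:ℝ) < 2*π := by positivity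
  have hhalf : π/(2*π) = (1/2 : ℝ) := by
    field_simp
  ext w
  simp only [Set.mem_image, Set.mem_union, Set.mem_setOf_eq, Set.mem_insert_iff,
    Set.mem_singleton_iff]
  constructor
  · rintro ⟨⟨x, y⟩, hz, rfl⟩
    rcases lt_trichotomy (0:ℝ) ((x:ℂ).im) with him | him | him
    · -- Im x > 0 : triangle U₁
      obtain ⟨h1, h2, h3, h4⟩ := forward_pos hz him
      left
      refine ⟨_, _, rfl, Or.inl ⟨div_pos h1 h2π, ?_, ?_, ?_⟩⟩
      · rw [div_lt_iff₀ h2π]; linarith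
      · rw [lt_div_iff₀ h2π]; linarith
      · have e : -(1/2:ℝ) + Complex.arg ↑x / (2*π) = (Complex.arg ↑x - π)/(2*π) := by
          field_simp; try ring
        rw [e]
        gcongr
    · -- real case
      have hxne : ((x:ℂ)) ≠ 0 := x.ne_zero
      have hyne : ((y:ℂ)) ≠ 0 := y.ne_zero
      set a := ((x:ℂ)).re with hadef
      have hxr : (x:ℂ) = ((a : ℝ) : ℂ) := by
        refine Complex.ext ?_ ?_ <;> simp [← him, hadef]
      have hyr : (y:ℂ) = ((-1 - a : ℝ) : ℂ) := by
        have : (y:ℂ) = -1 - (x:ℂ) := by linear_combination hz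
        rw [this, hxr]; push_cast; ring
      have ha0 : a ≠ 0 := fun h => hxne (by rw [hxr, h]; simp)
      have ha1 : a ≠ -1 := fun h => hyne (by rw [hyr, h]; norm_num)
      right
      rcases lt_or_gt_of_ne ha0 with haneg | hapos
      · have hax : Complex.arg ↑x = π := by rw [hxr]; exact Complex.arg_ofReal_of_neg haneg
        rcases lt_trichotomy a (-1) with h | h | h
        · have hay : Complex.arg ↑y = 0 := by
            rw [hyr]; exact Complex.arg_ofReal_of_nonneg (by linarith)
          left
          rw [hax, hay, hhalf, zero_div]
        · exact absurd h ha1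
        · have hay : Complex.arg ↑y = π := by
            rw [hyr]; exact Complex.arg_ofReal_of_neg (by linarith)
          right; left
          rw [hax, hay, hhalf]
      · have hax : Complex.arg ↑x = 0 := by
          rw [hxr]; exact Complex.arg_ofReal_of_nonneg hapos.le
        have hay : Complex.arg ↑y = π := by
          rw [hyr]; exact Complex.arg_ofReal_of_neg (by linarith)
        right; right
        rw [hax, hay, hhalf, zero_div]
    · -- Im x < 0 : triangle U₂
      have hzc : (1:ℂ) + (starRingEnd ℂ) ↑x + (starRingEnd ℂ) ↑y = 0 := by
        have := congrArg (starRingEnd ℂ) hz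
        simpa using this
      have himc : 0 < ((starRingEnd ℂ) (x:ℂ)).im := by
        simpa using him
      obtain ⟨h1, h2, h3, h4⟩ := forward_pos hzc himc
      have hyim : 0 < ((y:ℂ)).im := by
        have : (y:ℂ) = -1 - (x:ℂ) := by linear_combination hz
        rw [this]; simpa using him
      have hax : Complex.arg ((starRingEnd ℂ) (x:ℂ)) = -Complex.arg ↑x := by
        rw [Complex.arg_conj, if_neg]
        intro h; exact him.ne (Complex.arg_eq_pi_iff.1 h).2
      have hay : Complex.arg ((starRingEnd ℂ) (y:ℂ)) = -Complex.arg ↑y := by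
        rw [Complex.arg_conj, if_neg]
        intro h; exact hyim.ne' (Complex.arg_eq_pi_iff.1 h).2
      rw [hax] at h1 h2 h4
      rw [hay] at h3 h4
      left
      refine ⟨_, _, rfl, Or.inr ⟨?_, ?_, ?_, ?_⟩⟩
      · rw [lt_div_iff₀ h2π]; linarith
      · exact div_neg_of_neg_of_pos (by linarith) h2π
      · have e : (1/2:ℝ) + Complex.arg ↑x / (2*π) = (π + Complex.arg ↑x)/(2*π) := by
          field_simp; try ring
        rw [e]
        gcongr
        linarith
      · rw [div_lt_iff₀ h2π]; linarith
  · rintro (⟨θ, φ, rfl, hcase⟩ | hpt)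
    · -- the two triangles
      have hmdl : (2*π*θ)/(2*π) = θ := mul_div_cancel_left₀ θ (ne_of_gt h2π)
      have hmdl' : (2*π*φ)/(2*π) = φ := mul_div_cancel_left₀ φ (ne_of_gt h2π)
      have main : ∃ z : ℂˣ × ℂˣ, ((1 : ℂ) + ↑z.1 + ↑z.2 = 0) ∧
          Complex.arg ↑z.1 = 2*π*θ ∧ Complex.arg ↑z.2 = 2*π*φ := by
        rcases hcase with ⟨h1, h2, h3, h4⟩ | ⟨h1, h2, h3, h4⟩
        · -- U₁ : α ∈ (0,π), β ∈ (-π, α - π)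
          have hα1 : 0 < 2*π*θ := by nlinarith
          have hα2 : 2*π*θ < π := by nlinarith
          have hβ1 : -π < 2*π*φ := by nlinarith
          have hβ2 : 2*π*φ < 2*π*θ - π := by nlinarith
          have hsa : 0 < Real.sin (2*π*θ) := Real.sin_pos_of_pos_of_lt_pi hα1 hα2
          have hsb : Real.sin (2*π*φ) < 0 :=
            Real.sin_neg_of_neg_of_neg_pi_lt (by linarith) hβ1
          have hsd : 0 < Real.sin (2*π*φ - 2*π*θ) := by
            have e : Real.sin (2*π*φ - 2*π*θ) = Real.sin (2*π*φ - 2*π*θ + 2*π) := by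
              rw [Real.sin_add_two_pi]
            rw [e]
            exact Real.sin_pos_of_pos_of_lt_pi (by linarith) (by linarith)
          exact exists_point ⟨by linarith, by linarith⟩ ⟨hβ1, by linarith⟩
            (div_pos (by linarith) hsd) (div_pos hsa hsd)
        · -- U₂ : α ∈ (-π,0), β ∈ (π+α, π)
          have hα1 : -π < 2*π*θ := by nlinarith
          have hα2 : 2*π*θ < 0 := by nlinarith
          have hβ1 : π + 2*π*θ < 2*π*φ := by nlinarith
          have hβ2 : 2*π*φ < π := by nlinarith
          have hsa : Real.sin (2*π*θ) < 0 :=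
            Real.sin_neg_of_neg_of_neg_pi_lt hα2 hα1
          have hsb : 0 < Real.sin (2*π*φ) :=
            Real.sin_pos_of_pos_of_lt_pi (by linarith) hβ2
          have hsd : Real.sin (2*π*φ - 2*π*θ) < 0 := by
            have e : Real.sin (2*π*φ - 2*π*θ) = -Real.sin (2*π*φ - 2*π*θ - π) := by
              rw [Real.sin_sub_pi, neg_neg]
            have hpos : 0 < Real.sin (2*π*φ - 2*π*θ - π) :=
              Real.sin_pos_of_pos_of_lt_pi (by linarith) (by linarith)
            rw [e]
            linarith
          refine exists_point ⟨by linarith, by linarith⟩ ⟨by linarith, by linarith⟩ ?_ ?_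
          · exact div_pos_iff.2 (Or.inr ⟨by linarith, hsd⟩)
          · exact div_pos_iff.2 (Or.inr ⟨by linarith, hsd⟩)
      obtain ⟨z, hz, ha, hb⟩ := main
      refine ⟨z, hz, ?_⟩
      rw [ha, hb, hmdl, hmdl']
    · -- the three special points
      have harg2 : Complex.arg (-2 : ℂ) = π := by
        rw [show ((-2:ℂ)) = (((-2:ℝ)) : ℂ) by norm_num]
        exact Complex.arg_ofReal_of_neg (by norm_num)
      have harghalf : Complex.arg (-(1/2) : ℂ) = π := by
        rw [show ((-(1/2):ℂ)) = (((-(1/2):ℝ)) : ℂ) by norm_num]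
        exact Complex.arg_ofReal_of_neg (by norm_num)
      rcases hpt with rfl | rfl | rfl
      · refine ⟨(Units.mk0 (-2 : ℂ) (by norm_num), 1), by simp only [Set.mem_setOf_eq, Units.val_mk0, Units.val_one]; norm_num, ?_⟩
        simp only [Units.val_mk0, Units.val_one, Complex.arg_one, harg2, zero_div, hhalf]
      · refine ⟨(Units.mk0 (-(1/2) : ℂ) (by norm_num), Units.mk0 (-(1/2) : ℂ) (by norm_num)),
          by simp only [Set.mem_setOf_eq, Units.val_mk0]; norm_num, ?_⟩
        simp only [Units.val_mk0, harghalf, hhalf]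
      · refine ⟨(1, Units.mk0 (-2 : ℂ) (by norm_num)), by simp only [Set.mem_setOf_eq, Units.val_mk0, Units.val_one]; norm_num, ?_⟩
        simp only [Units.val_mk0, Units.val_one, Complex.arg_one, harg2, zero_div, hhalf]
end

section
/- Let A = {(α, β, γ) ∈ (ℂ*)³ : α^p β^r = 1, α^q β^s = 1, αβγ = 1} for integers p, q, r, s with ps - qr ≠ 0. Then A is a finite group of order |ps - qr|. -/
namespace Stmt9Aux

/-- The solution set in `(ℂˣ)²`. -/
def K (p q r s : ℤ) : Set (ℂˣ × ℂˣ) :=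
  {v | v.1 ^ p * v.2 ^ r = 1 ∧ v.1 ^ q * v.2 ^ s = 1}

lemma zpow_sub_key (a : ℂˣ) (m k n : ℤ) : a ^ (m - k * n) = a ^ m * (a ^ n) ^ (-k) := by
  rw [show m - k * n = m + n * (-k) by ring, zpow_add, zpow_mul]

lemma rowop (p q r s k : ℤ) : K p q r s = K (p - k * q) q (r - k * s) s := by
  have key : ∀ a b : ℂˣ, a ^ (p - k * q) * b ^ (r - k * s)
      = (a ^ p * b ^ r) * ((a ^ q * b ^ s) ^ (-k)) := by
    intro a b
    rw [zpow_sub_key, zpow_sub_key, mul_zpow, mul_mul_mul_comm]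
  ext v
  simp only [K, Set.mem_setOf_eq]
  constructor <;> rintro ⟨h1, h2⟩ <;> refine ⟨?_, h2⟩
  · rw [key, h1, h2, one_zpow, mul_one]
  · have hk := key v.1 v.2
    rw [h2, one_zpow, mul_one] at hk
    rw [← hk]; exact h1

lemma swap_eq (p q r s : ℤ) : K p q r s = K q p s r := by
  ext v; exact and_comm

lemma zpow_eq_one_iff_natAbs (a : ℂˣ) (n : ℤ) : a ^ n = 1 ↔ a ^ n.natAbs = 1 := by
  rcases Int.natAbs_eq n with h | h
  · conv_lhs => rw [h]
    rw [zpow_natCast]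
  · conv_lhs => rw [h]
    rw [zpow_neg, inv_eq_one, zpow_natCast]

lemma card_roots (n : ℤ) (hn : n ≠ 0) :
    Finite {a : ℂˣ // a ^ n = 1} ∧ Nat.card {a : ℂˣ // a ^ n = 1} = n.natAbs := by
  have : NeZero n.natAbs := ⟨Int.natAbs_ne_zero.mpr hn⟩
  have e : {a : ℂˣ // a ^ n = 1} ≃ rootsOfUnity n.natAbs ℂ :=
    Equiv.subtypeEquivRight fun a => by
      rw [zpow_eq_one_iff_natAbs, mem_rootsOfUnity]
  have hcard :=
    (Complex.isPrimitiveRoot_exp n.natAbs (NeZero.ne _)).card_rootsOfUnity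
  exact ⟨Finite.of_equiv _ e.symm, by rw [Nat.card_congr e, hcard]⟩

lemma exists_zpow_eq (c : ℂˣ) (n : ℤ) (hn : n ≠ 0) : ∃ x : ℂˣ, x ^ n = c := by
  have hpos : 0 < n.natAbs := Nat.pos_of_ne_zero (Int.natAbs_ne_zero.mpr hn)
  obtain ⟨z, hz⟩ := IsAlgClosed.exists_pow_nat_eq (c : ℂ) hpos
  have hz0 : z ≠ 0 := by
    rintro rfl
    rw [zero_pow hpos.ne'] at hz
    exact c.ne_zero hz.symm
  have hu : (Units.mk0 z hz0) ^ (n.natAbs : ℕ) = c := Units.ext (by simpa using hz)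
  rcases Int.natAbs_eq n with h | h
  · exact ⟨Units.mk0 z hz0, by rw [h, zpow_natCast, hu]⟩
  · refine ⟨(Units.mk0 z hz0)⁻¹, ?_⟩
    rw [h, zpow_neg, inv_zpow, inv_inv, zpow_natCast, hu]

noncomputable def fiberEquiv (c : ℂˣ) (n : ℤ) (hn : n ≠ 0) :
    {a : ℂˣ // a ^ n = c} ≃ {a : ℂˣ // a ^ n = 1} := by
  let x := (exists_zpow_eq c n hn).choose
  have hx : x ^ n = c := (exists_zpow_eq c n hn).choose_spec
  exact
    { toFun := fun a => ⟨a.1 * x⁻¹, by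
        rw [mul_zpow, inv_zpow, a.2, hx, mul_inv_cancel]⟩
      invFun := fun a => ⟨a.1 * x, by rw [mul_zpow, a.2, hx, one_mul]⟩
      left_inv := fun a => Subtype.ext (by simp)
      right_inv := fun a => Subtype.ext (by simp) }

lemma base (p r s : ℤ) (hp : p ≠ 0) (hs : s ≠ 0) :
    Finite (K p 0 r s) ∧ Nat.card (K p 0 r s) = (p * s).natAbs := by
  have e1 : K p 0 r s ≃ (b : {b : ℂˣ // b ^ s = 1}) × {a : ℂˣ // a ^ p = ((b : ℂˣ) ^ r)⁻¹} :=
    { toFun := fun v => ⟨⟨v.1.2, by have h := v.2.2; rwa [zpow_zero, one_mul] at h⟩,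
        ⟨v.1.1, eq_inv_of_mul_eq_one_left v.2.1⟩⟩
      invFun := fun x => ⟨(x.2.1, x.1.1),
        ⟨by rw [x.2.2, inv_mul_cancel], by rw [zpow_zero, one_mul, x.1.2]⟩⟩
      left_inv := fun v => rfl
      right_inv := fun x => rfl }
  have e2 : (b : {b : ℂˣ // b ^ s = 1}) × {a : ℂˣ // a ^ p = ((b : ℂˣ) ^ r)⁻¹} ≃
      {b : ℂˣ // b ^ s = 1} × {a : ℂˣ // a ^ p = 1} :=
    (Equiv.sigmaCongrRight fun b => fiberEquiv _ p hp).trans (Equiv.sigmaEquivProd _ _)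
  have e := e1.trans e2
  obtain ⟨hf1, hc1⟩ := card_roots s hs
  obtain ⟨hf2, hc2⟩ := card_roots p hp
  refine ⟨Finite.of_equiv _ e.symm, ?_⟩
  rw [Nat.card_congr e, Nat.card_prod, hc1, hc2, Int.natAbs_mul, Nat.mul_comm]

lemma main : ∀ n : ℕ, ∀ p q r s : ℤ, q.natAbs = n → p * s - q * r ≠ 0 →
    Finite (K p q r s) ∧ Nat.card (K p q r s) = (p * s - q * r).natAbs := by
  intro n
  induction n using Nat.strong_induction_on with
  | _ n ih =>
    intro p q r s hq hdet
    rcases eq_or_ne q 0 with rfl | hq0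
    · have hps : p * s ≠ 0 := by
        intro hc; apply hdet; rw [hc]; ring
      have hp : p ≠ 0 := fun hc => hps (by rw [hc, zero_mul])
      have hs : s ≠ 0 := fun hc => hps (by rw [hc, mul_zero])
      obtain ⟨hf, hc⟩ := base p r s hp hs
      refine ⟨hf, ?_⟩
      rw [hc]; congr 1; ring
    · set k := p / q with hk
      have hmod : p - k * q = p % q := by rw [Int.emod_def]; ring
      have hlt : (p % q).natAbs < n := by
        have h1 := Int.emod_lt p hq0
        have h2 := Int.emod_nonneg p hq0
        omega
      have hK : K p q r s = K q (p % q) s (r - k * s) := by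
        rw [rowop p q r s k, hmod, swap_eq]
      have hdet' : q * (r - k * s) - (p % q) * s = -(p * s - q * r) := by
        rw [← hmod]; ring
      have hdet'' : q * (r - k * s) - (p % q) * s ≠ 0 := by
        rw [hdet']; exact neg_ne_zero.mpr hdet
      obtain ⟨hf, hc⟩ := ih _ hlt q (p % q) s (r - k * s) rfl hdet''
      rw [hK]
      exact ⟨hf, by rw [hc, hdet', Int.natAbs_neg]⟩

def groupAEquiv (p q r s : ℤ) :
    {v : ℂˣ × ℂˣ × ℂˣ // v.1 ^ p * v.2.1 ^ r = 1 ∧ v.1 ^ q * v.2.1 ^ s = 1 ∧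
      v.1 * v.2.1 * v.2.2 = 1} ≃ K p q r s where
  toFun v := ⟨(v.1.1, v.1.2.1), v.2.1, v.2.2.1⟩
  invFun v := ⟨(v.1.1, v.1.2, (v.1.1 * v.1.2)⁻¹), v.2.1, v.2.2, mul_inv_cancel _⟩
  left_inv v := by
    obtain ⟨⟨a, b, c⟩, h1, h2, h3⟩ := v
    have : c = (a * b)⁻¹ := eq_inv_of_mul_eq_one_right h3
    subst this
    rfl
  right_inv v := rfl

end Stmt9Aux

/-- The subgroup `A = {(α,β,γ) ∈ (ℂ*)³ : α^p β^r = 1, α^q β^s = 1, αβγ = 1}`. -/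
def groupA (p q r s : ℤ) : Set (ℂˣ × ℂˣ × ℂˣ) :=
  {v | v.1 ^ p * v.2.1 ^ r = 1 ∧ v.1 ^ q * v.2.1 ^ s = 1 ∧ v.1 * v.2.1 * v.2.2 = 1}

/-- If `ps - qr ≠ 0`, then `A` is a finite group of order `|ps - qr|`. -/
theorem stmt_9 (p q r s : ℤ) (h : p * s - q * r ≠ 0) :
    Finite (groupA p q r s) ∧ Nat.card (groupA p q r s) = (p * s - q * r).natAbs := by
  obtain ⟨hf, hc⟩ := Stmt9Aux.main (q.natAbs) p q r s rfl h
  have e : groupA p q r s ≃ Stmt9Aux.K p q r s := Stmt9Aux.groupAEquiv p q r s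
  exact ⟨Finite.of_equiv _ e.symm, by rw [Nat.card_congr e, hc]⟩
end
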